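/- arXiv:1801.00339 — 2 statements merged into one kernel-verified Lean document; each statement's English description precedes it below -/
import Mathlib

section
/- Let H be a complex Hilbert space, I a countable index set, (e_n)_{n∈I} a Riesz sequence in H, and (f_n)_{n∈I} a sequence in H that is ℓ²-independent. Suppose there exist q ∈ (0,1) and a finite subset J ⊆ I such that ‖∑_{n∉J} a_n (e_n − f_n)‖² ≤ q · ‖∑_{n∈I} a_n e_n‖² for all finitely supported families of complex scalars (a_n)_{n∈I}. Then (f_n)_{n∈I} is also a Riesz sequence in H. -/
open MeasureTheory

/-- A family `e` indexed by `I` in a normed `ℂ`-module is a *Riesz sequence*: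
there are constants `0 < c ≤ C` with
`c·∑‖a n‖² ≤ ‖∑ a n • e n‖² ≤ C·∑‖a n‖²` for all finitely supported scalars. -/
def IsRieszSequence {H : Type*} [NormedAddCommGroup H] [Module ℂ H]
    {I : Type*} (e : I → H) : Prop :=
  ∃ c C : ℝ, 0 < c ∧ c ≤ C ∧ ∀ a : I →₀ ℂ,
    c * ∑ n ∈ a.support, ‖a n‖ ^ 2 ≤ ‖∑ n ∈ a.support, a n • e n‖ ^ 2 ∧
    ‖∑ n ∈ a.support, a n • e n‖ ^ 2 ≤ C * ∑ n ∈ a.support, ‖a n‖ ^ 2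

/-- A family `f` is *ℓ²-independent*: any square-summable family of coefficients whose
(unconditional) sum `∑ c n • f n` converges to `0` must vanish identically. -/
def IsL2Independent {H : Type*} [NormedAddCommGroup H] [Module ℂ H]
    {I : Type*} (f : I → H) : Prop :=
  ∀ c : I → ℂ, Summable (fun n => ‖c n‖ ^ 2) →
    HasSum (fun n => c n • f n) 0 → ∀ n, c n = 0

/-!
Let `T x = ∑ xₙ • fₙ` be the synthesis operator of `f` on `ℓ²(I)`; it is bounded because `f`
differs from the Riesz sequence `e` by a family that is Bessel off `J` and finite on `J`.
On sequences vanishing on `J`, the hypothesis makes `x ↦ ∑ xₙ • (eₙ - fₙ)` a strict contraction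
relative to `x ↦ ∑ xₙ • eₙ`, so `T` is bounded below there by `(1 - √q) √c`, with `c` the lower
Riesz bound of `e`. That subspace has finite codimension, so `T` has closed range; `T` is
injective by ℓ²-independence, hence bounded below on all of `ℓ²(I)` by the open mapping theorem,
which is the lower Riesz bound for `f`.
-/

open Filter Topology
open scoped NNReal

theorem Finsupp.sum_support_indicator_sdiff {I 𝕜 M : Type*} [Zero 𝕜] [AddCommMonoid M]
    [DecidableEq I] (s t : Finset I) (x : I → 𝕜) (g : I → 𝕜 → M) (hg : ∀ n, g n 0 = 0) :
    ∑ n ∈ (indicator s fun n _ => x n).support \ t, g n (indicator s (fun n _ => x n) n) =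
      ∑ n ∈ s \ t, g n (x n) := by
  rw [Finset.sum_subset (Finset.sdiff_subset_sdiff (support_indicator_subset _ _) le_rfl)]
  · exact Finset.sum_congr rfl fun n hn => by rw [indicator_of_mem (Finset.sdiff_subset hn)]
  · intro n hn hn'
    rw [notMem_support_iff.1 fun h => hn' (Finset.mem_sdiff.2 ⟨h, (Finset.mem_sdiff.1 hn).2⟩),
      hg]

theorem Finsupp.sum_support_indicator {I 𝕜 M : Type*} [Zero 𝕜] [AddCommMonoid M]
    (s : Finset I) (x : I → 𝕜) (g : I → 𝕜 → M) (hg : ∀ n, g n 0 = 0) :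
    ∑ n ∈ (indicator s fun n _ => x n).support, g n (indicator s (fun n _ => x n) n) =
      ∑ n ∈ s, g n (x n) := by
  classical
  simpa using sum_support_indicator_sdiff s ∅ x g hg

theorem ContinuousLinearMap.exists_antilipschitzWith_of_injective_of_cofg
    {𝕜 E F : Type*} [NontriviallyNormedField 𝕜] [CompleteSpace 𝕜]
    [NormedAddCommGroup E] [NormedSpace 𝕜 E] [CompleteSpace E]
    [NormedAddCommGroup F] [NormedSpace 𝕜 F] [CompleteSpace F]
    (T : E →L[𝕜] F) (hT : Function.Injective T) (W : Submodule 𝕜 E) [W.CoFG]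
    (hW : IsClosed (W : Set E)) {K : ℝ≥0} (hTW : ∀ w ∈ W, ‖w‖ ≤ K * ‖T w‖) :
    ∃ K', AntilipschitzWith K' T := by
  have : CompleteSpace W := hW.completeSpace_coe
  have hanti : AntilipschitzWith K (T.comp W.subtypeL) :=
    (T.comp W.subtypeL).antilipschitz_of_bound fun w => hTW w w.2
  have hmap : IsClosed (W.map (T : E →ₗ[𝕜] F) : Set F) := by
    convert hanti.isClosed_range (T.comp W.subtypeL).uniformContinuous using 1
    ext; simp
  exact T.antilipschitz_of_injective_of_isClosed_range hT
    (LinearMap.isClosed_range_of_isClosed_map_of_finiteDimensional_quotient hmap)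

section Perturbation

variable {𝕜 I H : Type*} [RCLike 𝕜] [NormedAddCommGroup H] [NormedSpace 𝕜 H]

theorem norm_sum_smul_le_sqrt_mul_sqrt (s : Finset I) (x : I → 𝕜) (g : I → H) :
    ‖∑ n ∈ s, x n • g n‖ ≤ √(∑ n ∈ s, ‖x n‖ ^ 2) * √(∑ n ∈ s, ‖g n‖ ^ 2) :=
  calc ‖∑ n ∈ s, x n • g n‖ ≤ ∑ n ∈ s, ‖x n‖ * ‖g n‖ :=
        (norm_sum_le _ _).trans_eq (by simp only [norm_smul])
    _ ≤ _ := Real.sum_mul_le_sqrt_mul_sqrt _ _ _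

theorem le_sqrt_mul_sqrt_of_sq_le_mul {a k S : ℝ} (hS : 0 ≤ S) (h : a ^ 2 ≤ k * S) :
    a ≤ √k * √S :=
  (le_abs_self a).trans ((Real.abs_le_sqrt h).trans_eq (Real.sqrt_mul' k hS))

variable [DecidableEq I] {e f : I → H} {J : Finset I} {q : ℝ}

theorem norm_sum_smul_le_of_perturbation {C : ℝ}
    (he : ∀ (x : I → 𝕜) (s : Finset I), ‖∑ n ∈ s, x n • e n‖ ^ 2 ≤ C * ∑ n ∈ s, ‖x n‖ ^ 2)
    (hclose : ∀ (x : I → 𝕜) (s : Finset I),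
      ‖∑ n ∈ s \ J, x n • (e n - f n)‖ ^ 2 ≤ q * ‖∑ n ∈ s, x n • e n‖ ^ 2)
    (x : I → 𝕜) (s : Finset I) :
    ‖∑ n ∈ s, x n • f n‖ ≤
      (√C * (1 + √q) + √(∑ n ∈ J, ‖e n - f n‖ ^ 2)) * √(∑ n ∈ s, ‖x n‖ ^ 2) := by
  have hS : 0 ≤ ∑ n ∈ s, ‖x n‖ ^ 2 := by positivity
  have hE : ‖∑ n ∈ s, x n • e n‖ ≤ √C * √(∑ n ∈ s, ‖x n‖ ^ 2) :=
    le_sqrt_mul_sqrt_of_sq_le_mul hS (he x s)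
  have hout : ‖∑ n ∈ s \ J, x n • (e n - f n)‖ ≤ √q * ‖∑ n ∈ s, x n • e n‖ := by
    simpa using le_sqrt_mul_sqrt_of_sq_le_mul (sq_nonneg _) (hclose x s)
  have hin : ‖∑ n ∈ s ∩ J, x n • (e n - f n)‖ ≤
      √(∑ n ∈ s, ‖x n‖ ^ 2) * √(∑ n ∈ J, ‖e n - f n‖ ^ 2) :=
    (norm_sum_smul_le_sqrt_mul_sqrt _ _ _).trans <| mul_le_mul
      (Real.sqrt_le_sqrt <| Finset.sum_le_sum_of_subset_of_nonneg Finset.inter_subset_left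
        fun _ _ _ => by positivity)
      (Real.sqrt_le_sqrt <| Finset.sum_le_sum_of_subset_of_nonneg Finset.inter_subset_right
        fun _ _ _ => by positivity)
      (Real.sqrt_nonneg _) (Real.sqrt_nonneg _)
  have hsplit : ∑ n ∈ s, x n • f n = ∑ n ∈ s, x n • e n -
      ∑ n ∈ s \ J, x n • (e n - f n) - ∑ n ∈ s ∩ J, x n • (e n - f n) := by
    rw [sub_sub, add_comm, Finset.sum_inter_add_sum_sdiff, ← Finset.sum_sub_distrib]
    simp only [smul_sub, sub_sub_cancel]
  have hout' : ‖∑ n ∈ s \ J, x n • (e n - f n)‖ ≤ √q * (√C * √(∑ n ∈ s, ‖x n‖ ^ 2)) :=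
    hout.trans (mul_le_mul_of_nonneg_left hE (Real.sqrt_nonneg q))
  rw [hsplit]
  calc _ ≤ ‖∑ n ∈ s, x n • e n‖ + ‖∑ n ∈ s \ J, x n • (e n - f n)‖ +
        ‖∑ n ∈ s ∩ J, x n • (e n - f n)‖ :=
        (norm_sub_le _ _).trans (add_le_add_left (norm_sub_le _ _) _)
    _ ≤ _ := by linarith

theorem le_norm_sum_smul_of_perturbation {c : ℝ}
    (he : ∀ (x : I → 𝕜) (s : Finset I), c * ∑ n ∈ s, ‖x n‖ ^ 2 ≤ ‖∑ n ∈ s, x n • e n‖ ^ 2)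
    (hclose : ∀ (x : I → 𝕜) (s : Finset I),
      ‖∑ n ∈ s \ J, x n • (e n - f n)‖ ^ 2 ≤ q * ‖∑ n ∈ s, x n • e n‖ ^ 2)
    (hq : q ≤ 1) (x : I → 𝕜) (hx : ∀ n ∈ J, x n = 0) (s : Finset I) :
    (1 - √q) * √c * √(∑ n ∈ s, ‖x n‖ ^ 2) ≤ ‖∑ n ∈ s, x n • f n‖ := by
  have hE : √c * √(∑ n ∈ s, ‖x n‖ ^ 2) ≤ ‖∑ n ∈ s, x n • e n‖ := by
    have := Real.sqrt_le_sqrt (he x s)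
    rwa [Real.sqrt_mul' c (by positivity), Real.sqrt_sq (norm_nonneg _)] at this
  have hout : ‖∑ n ∈ s \ J, x n • (e n - f n)‖ ≤ √q * ‖∑ n ∈ s, x n • e n‖ := by
    simpa using le_sqrt_mul_sqrt_of_sq_le_mul (sq_nonneg _) (hclose x s)
  have hsdiff : ∑ n ∈ s \ J, x n • (e n - f n) = ∑ n ∈ s, x n • (e n - f n) :=
    Finset.sum_subset Finset.sdiff_subset fun n hns hn => by
      rw [hx n (by simpa [hns] using hn), zero_smul]
  have hsplit : ∑ n ∈ s, x n • f n =
      ∑ n ∈ s, x n • e n - ∑ n ∈ s \ J, x n • (e n - f n) := by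
    rw [hsdiff, ← Finset.sum_sub_distrib]
    simp only [smul_sub, sub_sub_cancel]
  calc (1 - √q) * √c * √(∑ n ∈ s, ‖x n‖ ^ 2) ≤ (1 - √q) * ‖∑ n ∈ s, x n • e n‖ := by
        rw [mul_assoc]
        exact mul_le_mul_of_nonneg_left hE (sub_nonneg.2 (Real.sqrt_le_one.2 hq))
    _ ≤ ‖∑ n ∈ s, x n • e n‖ - ‖∑ n ∈ s \ J, x n • (e n - f n)‖ := by linarith
    _ ≤ _ := hsplit ▸ norm_sub_norm_le _ _

end Perturbation

theorem lp.hasSum_norm_sq {I : Type*} {E : I → Type*} [∀ i, NormedAddCommGroup (E i)]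
    (x : lp E 2) : HasSum (fun n => ‖x n‖ ^ 2) (‖x‖ ^ 2) := by
  simpa using lp.hasSum_norm (p := 2) (by norm_num) x

theorem lp.tendsto_sqrt_sum_norm_sq {I : Type*} {E : I → Type*} [∀ i, NormedAddCommGroup (E i)]
    (x : lp E 2) :
    Tendsto (fun s : Finset I => √(∑ n ∈ s, ‖x n‖ ^ 2)) atTop (𝓝 ‖x‖) := by
  simpa using (lp.hasSum_norm_sq x).sqrt

theorem lp.norm_sum_single_eq_sqrt {I : Type*} {E : I → Type*} [∀ i, NormedAddCommGroup (E i)]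
    [DecidableEq I] (s : Finset I) (x : ∀ i, E i) :
    ‖∑ n ∈ s, lp.single 2 n (x n)‖ = √(∑ n ∈ s, ‖x n‖ ^ 2) := by
  have := lp.norm_sum_single (p := 2) (by norm_num) x s
  simp only [ENNReal.toReal_ofNat, Real.rpow_two] at this
  rw [← this, Real.sqrt_sq (norm_nonneg _)]

section Synthesis

variable {𝕜 I H : Type*} [RCLike 𝕜] [NormedAddCommGroup H] [NormedSpace 𝕜 H] {f : I → H}

theorem norm_le_of_hasSum_smul {B : ℝ} {x : lp (fun _ : I => 𝕜) 2} {w : H}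
    (hw : HasSum (fun n => x n • f n) w)
    (hB : ∀ s : Finset I, ‖∑ n ∈ s, x n • f n‖ ≤ B * √(∑ n ∈ s, ‖x n‖ ^ 2)) :
    ‖w‖ ≤ B * ‖x‖ :=
  le_of_tendsto_of_tendsto' hw.norm ((lp.tendsto_sqrt_sum_norm_sq x).const_mul B) hB

theorem le_norm_of_hasSum_smul {m : ℝ} {x : lp (fun _ : I => 𝕜) 2} {w : H}
    (hw : HasSum (fun n => x n • f n) w)
    (hm : ∀ s : Finset I, m * √(∑ n ∈ s, ‖x n‖ ^ 2) ≤ ‖∑ n ∈ s, x n • f n‖) :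
    m * ‖x‖ ≤ ‖w‖ :=
  le_of_tendsto_of_tendsto' ((lp.tendsto_sqrt_sum_norm_sq x).const_mul m) hw.norm hm

theorem summable_smul_of_norm_sum_le [CompleteSpace H] {B : ℝ} {x : lp (fun _ : I => 𝕜) 2}
    (hB : ∀ s : Finset I, ‖∑ n ∈ s, x n • f n‖ ≤ B * √(∑ n ∈ s, ‖x n‖ ^ 2)) :
    Summable fun n => x n • f n := by
  rw [summable_iff_vanishing_norm]
  intro ε hε
  obtain ⟨s, hs⟩ := summable_iff_vanishing_norm.1 (lp.hasSum_norm_sq x).summable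
    ((ε / (|B| + 1)) ^ 2) (by positivity)
  refine ⟨s, fun t ht => ?_⟩
  have hsmall : √(∑ n ∈ t, ‖x n‖ ^ 2) < ε / (|B| + 1) := by
    rw [Real.sqrt_lt' (by positivity)]
    simpa [Real.norm_eq_abs, abs_of_nonneg (Finset.sum_nonneg fun n _ => sq_nonneg ‖x n‖)]
      using hs t ht
  calc ‖∑ n ∈ t, x n • f n‖ ≤ B * √(∑ n ∈ t, ‖x n‖ ^ 2) := hB t
    _ ≤ (|B| + 1) * √(∑ n ∈ t, ‖x n‖ ^ 2) :=
        mul_le_mul_of_nonneg_right (by linarith [le_abs_self B]) (Real.sqrt_nonneg _)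
    _ < (|B| + 1) * (ε / (|B| + 1)) := mul_lt_mul_of_pos_left hsmall (by positivity)
    _ = ε := mul_div_cancel₀ _ (by positivity)

variable [CompleteSpace H] {B : ℝ}
  (hB : ∀ (x : I → 𝕜) (s : Finset I), ‖∑ n ∈ s, x n • f n‖ ≤ B * √(∑ n ∈ s, ‖x n‖ ^ 2))

noncomputable def synthesis : lp (fun _ : I => 𝕜) 2 →L[𝕜] H :=
  LinearMap.mkContinuous
    { toFun := fun x => ∑' n, x n • f n
      map_add' := fun x y => by
        simp only [lp.coeFn_add, Pi.add_apply, add_smul]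
        exact (summable_smul_of_norm_sum_le (hB x)).tsum_add
          (summable_smul_of_norm_sum_le (hB y))
      map_smul' := fun c x => by
        simp only [lp.coeFn_smul, Pi.smul_apply, smul_assoc, RingHom.id_apply]
        exact (summable_smul_of_norm_sum_le (hB x)).tsum_const_smul c }
    B fun x => norm_le_of_hasSum_smul (summable_smul_of_norm_sum_le (hB x)).hasSum (hB x)

theorem hasSum_synthesis (x : lp (fun _ : I => 𝕜) 2) :
    HasSum (fun n => x n • f n) (synthesis hB x) :=
  (summable_smul_of_norm_sum_le (hB x)).hasSum

theorem synthesis_sum_single [DecidableEq I] (s : Finset I) (x : I → 𝕜) :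
    synthesis hB (∑ n ∈ s, lp.single 2 n (x n)) = ∑ n ∈ s, x n • f n := by
  rw [map_sum]
  refine Finset.sum_congr rfl fun n _ => (hasSum_synthesis hB _).unique ?_
  convert hasSum_single (f := fun i => lp.single (E := fun _ : I => 𝕜) 2 n (x n) i • f i) n
    fun i hi => by rw [lp.single_apply_ne 2 n _ hi, zero_smul]
  rw [lp.single_apply_self]

end Synthesis

theorem IsRieszSequence.exists_sum_bounds {I H : Type*} [NormedAddCommGroup H] [Module ℂ H]
    {e : I → H} (he : IsRieszSequence e) :
    ∃ c C : ℝ, 0 < c ∧ ∀ (x : I → ℂ) (s : Finset I),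
      c * ∑ n ∈ s, ‖x n‖ ^ 2 ≤ ‖∑ n ∈ s, x n • e n‖ ^ 2 ∧
      ‖∑ n ∈ s, x n • e n‖ ^ 2 ≤ C * ∑ n ∈ s, ‖x n‖ ^ 2 := by
  obtain ⟨c, C, hc, -, he⟩ := he
  refine ⟨c, C, hc, fun x s => ?_⟩
  rw [← Finsupp.sum_support_indicator s x (fun n c => ‖c‖ ^ 2) fun _ => by simp,
    ← Finsupp.sum_support_indicator s x (fun n c => c • e n) fun n => zero_smul ℂ (e n)]
  exact he _

section RieszSequence

variable {I H : Type*} [NormedAddCommGroup H] [NormedSpace ℂ H] [CompleteSpace H] {f : I → H}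
  {B : ℝ}
  (hB : ∀ (x : I → ℂ) (s : Finset I), ‖∑ n ∈ s, x n • f n‖ ≤ B * √(∑ n ∈ s, ‖x n‖ ^ 2))

theorem synthesis_injective (hf : IsL2Independent f) : Function.Injective (synthesis hB) :=
  (injective_iff_map_eq_zero _).2 fun x hx => lp.ext <| funext <|
    hf x (lp.hasSum_norm_sq x).summable (hx ▸ hasSum_synthesis hB x)

theorem exists_antilipschitzWith_synthesis (hf : IsL2Independent f) {J : Finset I} {m : ℝ}
    (hm : 0 < m)
    (hlow : ∀ x : I → ℂ, (∀ n ∈ J, x n = 0) → ∀ s : Finset I,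
      m * √(∑ n ∈ s, ‖x n‖ ^ 2) ≤ ‖∑ n ∈ s, x n • f n‖) :
    ∃ K, AntilipschitzWith K (synthesis hB) := by
  let restrictJ : lp (fun _ : I => ℂ) 2 →L[ℂ] (J → ℂ) :=
    ContinuousLinearMap.pi fun j => lp.evalCLM ℂ (fun _ : I => ℂ) 2 (j : I)
  have : restrictJ.ker.CoFG := Submodule.CoFG.ker _
  refine (synthesis hB).exists_antilipschitzWith_of_injective_of_cofg
    (synthesis_injective hB hf) restrictJ.ker restrictJ.isClosed_ker
    (K := ⟨m⁻¹, by positivity⟩) fun w hw => ?_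
  have hwJ : ∀ n ∈ J, w n = 0 := fun n hn => congr_fun (LinearMap.mem_ker.1 hw) ⟨n, hn⟩
  exact (le_inv_mul_iff₀ hm).2 (le_norm_of_hasSum_smul (hasSum_synthesis hB w) (hlow w hwJ))

theorem isRieszSequence_of_antilipschitzWith_synthesis {K : ℝ≥0}
    (hK : AntilipschitzWith K (synthesis hB)) : IsRieszSequence f := by
  classical
  refine ⟨((K : ℝ) ^ 2 + 1)⁻¹, max (B ^ 2) ((K : ℝ) ^ 2 + 1)⁻¹, by positivity, le_max_right _ _,
    fun a => ⟨?_, ?_⟩⟩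
  · have h := (synthesis hB).bound_of_antilipschitz hK (∑ n ∈ a.support, lp.single 2 n (a n))
    rw [lp.norm_sum_single_eq_sqrt, synthesis_sum_single] at h
    have h2 := pow_le_pow_left₀ (Real.sqrt_nonneg _) h 2
    rw [Real.sq_sqrt (by positivity), mul_pow] at h2
    rw [inv_mul_le_iff₀ (by positivity)]
    linarith [sq_nonneg ‖∑ n ∈ a.support, a n • f n‖]
  · have h := pow_le_pow_left₀ (norm_nonneg _) (hB a a.support) 2
    rw [mul_pow, Real.sq_sqrt (by positivity)] at h
    exact h.trans (mul_le_mul_of_nonneg_right (le_max_left _ _) (by positivity))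

end RieszSequence

theorem riesz_sequence_perturbation_general
    {H : Type*} [NormedAddCommGroup H] [InnerProductSpace ℂ H] [CompleteSpace H]
    {I : Type*} [DecidableEq I] (e f : I → H)
    (he : IsRieszSequence e) (hf : IsL2Independent f)
    (q : ℝ) (hq1 : q < 1) (J : Finset I)
    (hclose : ∀ a : I →₀ ℂ,
      ‖∑ n ∈ a.support \ J, a n • (e n - f n)‖ ^ 2 ≤
        q * ‖∑ n ∈ a.support, a n • e n‖ ^ 2) :
    IsRieszSequence f := by
  obtain ⟨c, C, hc, he⟩ := he.exists_sum_bounds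
  have hclose' (x : I → ℂ) (s : Finset I) :
      ‖∑ n ∈ s \ J, x n • (e n - f n)‖ ^ 2 ≤ q * ‖∑ n ∈ s, x n • e n‖ ^ 2 := by
    rw [← Finsupp.sum_support_indicator_sdiff s J x (fun n c => c • (e n - f n))
        fun n => zero_smul ℂ _,
      ← Finsupp.sum_support_indicator s x (fun n c => c • e n) fun n => zero_smul ℂ (e n)]
    exact hclose _
  have hB := norm_sum_smul_le_of_perturbation (fun x s => (he x s).2) hclose'
  have hm : 0 < (1 - √q) * √c :=
    mul_pos (sub_pos.2 ((Real.sqrt_lt' one_pos).2 (by simpa using hq1))) (Real.sqrt_pos.2 hc)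
  obtain ⟨K, hK⟩ := exists_antilipschitzWith_synthesis hB hf hm
    (le_norm_sum_smul_of_perturbation (fun x s => (he x s).1) hclose' hq1.le)
  exact isRieszSequence_of_antilipschitzWith_synthesis hB hK

/-- Paley–Wiener type perturbation (Lemma on Riesz sequences): if `e` is a Riesz sequence,
`f` is ℓ²-independent, and outside a finite set `J` the difference `e − f` is dominated in
the sense `‖∑_{n∉J} a n • (e n − f n)‖² ≤ q‖∑ a n • e n‖²` with `q ∈ (0,1)`,
then `f` is also a Riesz sequence. -/
theorem riesz_sequence_perturbation
    {H : Type*} [NormedAddCommGroup H] [InnerProductSpace ℂ H] [CompleteSpace H]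
    {I : Type*} [Countable I] [DecidableEq I] (e f : I → H)
    (he : IsRieszSequence e) (hf : IsL2Independent f)
    (q : ℝ) (hq0 : 0 < q) (hq1 : q < 1) (J : Finset I)
    (hclose : ∀ a : I →₀ ℂ,
      ‖∑ n ∈ a.support \ J, a n • (e n - f n)‖ ^ 2 ≤
        q * ‖∑ n ∈ a.support, a n • e n‖ ^ 2) :
    IsRieszSequence f :=
  riesz_sequence_perturbation_general e f he hf q hq1 J hclose
end

section
/- Let (S,σ) be a measure space, d ≥ 1, R > 0, let (F_n)_{n≥1} be an orthonormal family in the space L²(S,σ;ℂ^d) of square-integrable ℂ^d-valued functions, and let m : S → ℝ^d be measurable with |m(x)| ≤ R (Euclidean norm) for σ-a.e. x ∈ S. Then for every finitely supported family (u_j)_{j∈ℤ₀} of complex scalars: ∫_S |∑_{j∈ℤ₀} u_j · sgn(j) · (m(x)·F_{|j|}(x))|² dσ(x) ≤ R² · (∑_{j∈ℤ₀} |u_j|² − ∑_{j∈ℤ₀} u_j·conj(u_{−j})), where m(x)·F(x) denotes the sum ∑_{i=1}^d m_i(x)F_i(x) of the coordinatewise products. -/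
/-!
Writing `H = ∑ⱼ uⱼ sgn(j) F_{|j|}`, the integrand is `|⟪m, H⟫|² ≤ R² ‖H‖²` pointwise, so the
left-hand side is at most `R² ‖H‖²_{L²}`. Expanding `‖H‖²` by orthonormality, the pair `(j, k)`
contributes only when `|j| = |k|`, i.e. `k = ±j`; since `sgn(j) sgn(−j) = −1`, the cross terms
`k = −j` come with a minus sign.
-/

open MeasureTheory

/-- The index set `ℤ₀ = ℤ ∖ {0}`. -/
abbrev Z0 : Type := {j : ℤ // j ≠ 0}

/-- Negation `j ↦ -j` on `ℤ₀`. -/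
def Z0.neg (j : Z0) : Z0 := ⟨-j.1, neg_ne_zero.mpr j.2⟩

/-- The absolute value `|j| ∈ ℕ⁺` of `j ∈ ℤ₀`. -/
def Z0.idx (j : Z0) : ℕ+ := ⟨j.1.natAbs, Int.natAbs_pos.mpr j.2⟩

/-- The sign of `j ∈ ℤ₀`: `1` if `j > 0` and `-1` if `j < 0`. -/
def Z0.sgn (j : Z0) : ℝ := if 0 < j.1 then 1 else -1

open ComplexConjugate
open scoped InnerProductSpace

namespace Z0

lemma neg_ne_self (j : Z0) : j.neg ≠ j := fun h =>
  j.2 (by have := congrArg Subtype.val h; simp only [Z0.neg] at this; omega)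

lemma idx_eq_idx_iff {j k : Z0} : j.idx = k.idx ↔ k = j ∨ k = j.neg := by
  rw [← PNat.coe_inj, Z0.idx, Z0.idx, PNat.mk_coe, PNat.mk_coe, Int.natAbs_eq_natAbs_iff,
    Z0.neg, Subtype.ext_iff, Subtype.ext_iff]
  dsimp only
  omega

lemma sgn_sq (j : Z0) : j.sgn ^ 2 = 1 := by
  unfold Z0.sgn; split_ifs <;> norm_num

lemma sgn_mul_sgn_neg (j : Z0) : j.sgn * j.neg.sgn = -1 := by
  have := j.2
  simp only [Z0.sgn, Z0.neg]
  split_ifs <;> norm_num <;> omega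

end Z0

section InnerProduct

variable {𝕜 E S : Type*} [RCLike 𝕜] [NormedAddCommGroup E] [InnerProductSpace 𝕜 E]
  [MeasurableSpace S] {σ : Measure S}

lemma MeasureTheory.MemLp.integrable_inner {f g : S → E} (hf : MemLp f 2 σ) (hg : MemLp g 2 σ) :
    Integrable (fun x => ⟪f x, g x⟫_𝕜) σ := by
  refine (L2.integrable_inner (𝕜 := 𝕜) (hf.toLp f) (hg.toLp g)).congr ?_
  filter_upwards [hf.coeFn_toLp, hg.coeFn_toLp] with x hfx hgx
  rw [hfx, hgx]

lemma integral_norm_sum_smul_sq {ι : Type*} (s : Finset ι) (c : ι → 𝕜) {f : ι → S → E}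
    (hf : ∀ i ∈ s, MemLp (f i) 2 σ) :
    ∫ x, ‖∑ i ∈ s, c i • f i x‖ ^ 2 ∂σ =
      RCLike.re (∑ i ∈ s, ∑ k ∈ s, conj (c i) * (c k * ∫ x, ⟪f i x, f k x⟫_𝕜 ∂σ)) := by
  have hgram : ∀ x, ⟪∑ i ∈ s, c i • f i x, ∑ k ∈ s, c k • f k x⟫_𝕜 =
      ∑ i ∈ s, ∑ k ∈ s, conj (c i) * (c k * ⟪f i x, f k x⟫_𝕜) := fun x => by
    simp_rw [sum_inner, inner_smul_left, inner_sum, inner_smul_right, Finset.mul_sum]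
  have hint : ∀ i ∈ s, ∀ k ∈ s, Integrable (fun x => conj (c i) * (c k * ⟪f i x, f k x⟫_𝕜)) σ :=
    fun i hi k hk => (((hf i hi).integrable_inner (hf k hk)).const_mul _).const_mul _
  simp_rw [← inner_self_eq_norm_sq (𝕜 := 𝕜), hgram]
  rw [integral_re (integrable_finsetSum _ fun i hi => integrable_finsetSum _ (hint i hi)),
    integral_finsetSum _ fun i hi => integrable_finsetSum _ (hint i hi)]
  refine congrArg _ (Finset.sum_congr rfl fun i hi => ?_)
  simp_rw [integral_finsetSum _ (hint i hi), integral_const_mul]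

lemma integral_norm_inner_sq_le {v G : S → E} {R : ℝ} (hv : ∀ᵐ x ∂σ, ‖v x‖ ≤ R)
    (hG : MemLp G 2 σ) :
    ∫ x, ‖⟪v x, G x⟫_𝕜‖ ^ 2 ∂σ ≤ R ^ 2 * ∫ x, ‖G x‖ ^ 2 ∂σ := by
  rw [← integral_const_mul]
  refine integral_mono_of_nonneg (.of_forall fun _ => by positivity)
    (hG.norm.integrable_sq.const_mul _) ?_
  filter_upwards [hv] with x hx
  calc ‖⟪v x, G x⟫_𝕜‖ ^ 2 ≤ (‖v x‖ * ‖G x‖) ^ 2 := by gcongr; exact norm_inner_le_norm _ _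
    _ ≤ (R * ‖G x‖) ^ 2 := by gcongr
    _ = R ^ 2 * ‖G x‖ ^ 2 := mul_pow _ _ _

end InnerProduct

namespace EuclideanSpace

variable {ι : Type*} [Fintype ι]

def complexify (v : EuclideanSpace ℝ ι) : EuclideanSpace ℂ ι := WithLp.toLp 2 fun i => (v i : ℂ)

lemma norm_complexify (v : EuclideanSpace ℝ ι) : ‖complexify v‖ = ‖v‖ := by
  simp [EuclideanSpace.norm_eq, complexify]

lemma inner_complexify (v : EuclideanSpace ℝ ι) (w : EuclideanSpace ℂ ι) :
    ⟪complexify v, w⟫_ℂ = ∑ i, (v i : ℂ) * w i := by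
  simp [PiLp.inner_apply, complexify, mul_comm]

end EuclideanSpace

lemma Z0.sum_mul_ite_idx_eq {α : Type*} [NonAssocSemiring α] {K : Finset Z0} {a : Z0 → α}
    (ha : ∀ k ∉ K, a k = 0) (j : Z0) :
    ∑ k ∈ K, a k * (if j.idx = k.idx then 1 else 0) = a j + a j.neg := by
  have hpair : ∀ k, j.idx = k.idx ↔ k ∈ ({j, j.neg} : Finset Z0) := fun k => by
    simp [Z0.idx_eq_idx_iff]
  simp_rw [mul_ite, mul_one, mul_zero, hpair, Finset.sum_ite_mem]
  rw [Finset.sum_subset Finset.inter_subset_right, Finset.sum_pair j.neg_ne_self.symm]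
  intro k hk hkK
  exact ha k fun hK => hkK (Finset.mem_inter.mpr ⟨hK, hk⟩)

lemma Z0.re_conj_sgn_mul_add_sgn_neg (z w : ℂ) (j : Z0) :
    (conj (z * j.sgn) * (z * j.sgn + w * j.neg.sgn)).re = ‖z‖ ^ 2 - (z * conj w).re := by
  have hexpand : conj (z * j.sgn) * (z * j.sgn + w * j.neg.sgn) =
      conj z * z * ((j.sgn ^ 2 : ℝ) : ℂ) + conj z * w * ((j.sgn * j.neg.sgn : ℝ) : ℂ) := by
    simp only [map_mul, Complex.conj_ofReal]; push_cast; ring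
  rw [hexpand, j.sgn_sq, j.sgn_mul_sgn_neg, Complex.conj_mul', ← Complex.ofReal_pow]
  simp only [Complex.add_re, Complex.mul_re, Complex.ofReal_re, Complex.ofReal_im,
    Complex.conj_re, Complex.conj_im]
  ring

theorem integral_norm_sum_sgn_smul_sq {S E : Type*} [MeasurableSpace S] {σ : Measure S}
    [NormedAddCommGroup E] [InnerProductSpace ℂ E] {F : ℕ+ → S → E}
    (hF2 : ∀ n, MemLp (F n) 2 σ)
    (hFon : ∀ j k, ∫ x, ⟪F j x, F k x⟫_ℂ ∂σ = if j = k then 1 else 0) (u : Z0 →₀ ℂ) :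
    ∫ x, ‖∑ j ∈ u.support, (u j * Z0.sgn j) • F (Z0.idx j) x‖ ^ 2 ∂σ =
      ∑ j ∈ u.support, ‖u j‖ ^ 2 - (∑ j ∈ u.support, u j * conj (u j.neg)).re := by
  have hvanish : ∀ k ∉ u.support, u k * k.sgn = 0 := fun k hk => by
    rw [Finsupp.notMem_support_iff.mp hk, zero_mul]
  rw [integral_norm_sum_smul_sq _ _ fun j _ => hF2 j.idx]
  simp_rw [hFon, ← Finset.mul_sum, Z0.sum_mul_ite_idx_eq hvanish, RCLike.re_to_complex,
    Complex.re_sum, Z0.re_conj_sgn_mul_add_sgn_neg, Finset.sum_sub_distrib]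

theorem quasi_orthogonality_dot_product_general
    {S : Type*} [MeasurableSpace S] (σ : Measure S)
    (d : ℕ) (R : ℝ)
    (F : ℕ+ → S → EuclideanSpace ℂ (Fin d))
    (hF2 : ∀ n, MemLp (F n) 2 σ)
    (hFon : ∀ j k : ℕ+,
      ∫ x, (inner ℂ (F j x) (F k x) : ℂ) ∂σ = if j = k then 1 else 0)
    (m : S → EuclideanSpace ℝ (Fin d))
    (hmR : ∀ᵐ x ∂σ, ‖m x‖ ≤ R)
    (u : Z0 →₀ ℂ) :
    ∫ x, ‖∑ j ∈ u.support,
        u j * (Z0.sgn j : ℂ) * ∑ i, ((m x i : ℝ) : ℂ) * F j.idx x i‖ ^ 2 ∂σ ≤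
      R ^ 2 * ((∑ j ∈ u.support, ‖u j‖ ^ 2) -
        (∑ j ∈ u.support, u j * starRingEnd ℂ (u j.neg)).re) := by
  set H : S → EuclideanSpace ℂ (Fin d) := fun x =>
    ∑ j ∈ u.support, (u j * Z0.sgn j) • F (Z0.idx j) x
  have hH : MemLp H 2 σ :=
    memLp_finsetSum _ fun j _ => (hF2 (Z0.idx j)).const_smul (u j * Z0.sgn j)
  have hdot : ∀ x, ∑ j ∈ u.support, u j * Z0.sgn j * ∑ i, ((m x i : ℝ) : ℂ) * F (Z0.idx j) x i =
      ⟪(m x).complexify, H x⟫_ℂ := fun x => by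
    simp only [H, inner_sum, inner_smul_right, EuclideanSpace.inner_complexify]
  have hmR' : ∀ᵐ x ∂σ, ‖(m x).complexify‖ ≤ R := by
    simpa only [EuclideanSpace.norm_complexify] using hmR
  simp_rw [hdot]
  calc _ ≤ R ^ 2 * ∫ x, ‖H x‖ ^ 2 ∂σ := integral_norm_inner_sq_le hmR' hH
    _ = _ := by rw [integral_norm_sum_sgn_smul_sq hF2 hFon u]

/-- Abstract quasi-orthogonality lemma: if `(F_n)` is an orthonormal family in
`L²(S,σ;ℂ^d)` and `|m(x)| ≤ R` a.e., then for all finitely supported scalars `u`,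
`∫_S |∑_j u_j·sgn(j)·(m(x)·F_{|j|}(x))|² dσ ≤ R²·(∑|u_j|² − ∑ u_j·conj(u_{−j}))`. -/
theorem quasi_orthogonality_dot_product
    {S : Type*} [MeasurableSpace S] (σ : Measure S)
    (d : ℕ) (hd : 1 ≤ d) (R : ℝ) (hR : 0 < R)
    (F : ℕ+ → S → EuclideanSpace ℂ (Fin d))
    (hF2 : ∀ n, MemLp (F n) 2 σ)
    (hFon : ∀ j k : ℕ+,
      ∫ x, (inner ℂ (F j x) (F k x) : ℂ) ∂σ = if j = k then 1 else 0)
    (m : S → EuclideanSpace ℝ (Fin d)) (hm : Measurable m)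
    (hmR : ∀ᵐ x ∂σ, ‖m x‖ ≤ R)
    (u : Z0 →₀ ℂ) :
    ∫ x, ‖∑ j ∈ u.support,
        u j * (Z0.sgn j : ℂ) * ∑ i, ((m x i : ℝ) : ℂ) * F j.idx x i‖ ^ 2 ∂σ ≤
      R ^ 2 * ((∑ j ∈ u.support, ‖u j‖ ^ 2) -
        (∑ j ∈ u.support, u j * starRingEnd ℂ (u j.neg)).re) :=
  quasi_orthogonality_dot_product_general σ d R F hF2 hFon m hmR u
end
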